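/- Fix reals α, β with αβ ≠ 0 and let 𝔤 = 𝔤^{α,β}_{4.5} be the 4-dimensional real Lie algebra with basis e₁,...,e₄ and nonzero brackets [e₁,e₄] = e₁, [e₂,e₄] = βe₂, [e₃,e₄] = αe₃. A 4×4 real matrix R equals η·Id + D for some η ∈ ℝ and some derivation D of 𝔤 if and only if R₄₁ = R₄₂ = R₄₃ = 0, R₂₁ = βR₂₁, R₃₁ = αR₃₁, R₁₂ = βR₁₂, αR₃₂ = βR₃₂, R₁₃ = αR₁₃, and βR₂₃ = αR₂₃. In this case η = R₄₄. -/
import Mathlib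


open Matrix

/-- The Lie bracket of the Lie algebra, in coordinates. -/
def br (α : ℝ) (β : ℝ) (x y : Fin 4 → ℝ) : Fin 4 → ℝ :=
  ![(x 0 * y 3 - x 3 * y 0), β * (x 1 * y 3 - x 3 * y 1), α * (x 2 * y 3 - x 3 * y 2), (0:ℝ)]

/-- `D` (acting via `mulVec`) is a derivation of the bracket. -/
def IsDer (α : ℝ) (β : ℝ) (D : Matrix (Fin 4) (Fin 4) ℝ) : Prop :=
  ∀ x y : Fin 4 → ℝ, D.mulVec (br α β x y) = br α β (D.mulVec x) y + br α β x (D.mulVec y)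

lemma isDer_of (α β : ℝ) (D : Matrix (Fin 4) (Fin 4) ℝ)
    (h30 : D 3 0 = 0) (h31 : D 3 1 = 0) (h32 : D 3 2 = 0) (h33 : D 3 3 = 0)
    (h10 : D 1 0 = β * D 1 0) (h20 : D 2 0 = α * D 2 0)
    (h01 : D 0 1 = β * D 0 1) (h21 : α * D 2 1 = β * D 2 1)
    (h02 : D 0 2 = α * D 0 2) (h12 : β * D 1 2 = α * D 1 2) : IsDer α β D := by
  intro x y
  funext i
  fin_cases i <;>
    simp [br, mulVec, dotProduct, Fin.sum_univ_four, h30, h31, h32, h33]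
  · linear_combination (-(x 1 * y 3 - x 3 * y 1)) * h01 + (-(x 2 * y 3 - x 3 * y 2)) * h02
  · linear_combination (x 0 * y 3 - x 3 * y 0) * h10 + (-(x 2 * y 3 - x 3 * y 2)) * h12
  · linear_combination (x 0 * y 3 - x 3 * y 0) * h20 + (-(x 1 * y 3 - x 3 * y 1)) * h21

theorem stmt_15 (α : ℝ) (β : ℝ) (hα : α ≠ 0) (hβ : β ≠ 0) (R : Matrix (Fin 4) (Fin 4) ℝ) :
    ((∃ (η : ℝ) (D : Matrix (Fin 4) (Fin 4) ℝ), IsDer α β D ∧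
        R = η • (1 : Matrix (Fin 4) (Fin 4) ℝ) + D) ↔
      (R 3 0 = 0 ∧ R 3 1 = 0 ∧ R 3 2 = 0 ∧ R 1 0 = β * R 1 0 ∧ R 2 0 = α * R 2 0 ∧ R 0 1 = β * R 0 1 ∧ α * R 2 1 = β * R 2 1 ∧ R 0 2 = α * R 0 2 ∧ β * R 1 2 = α * R 1 2)) ∧
    (∀ (η : ℝ) (D : Matrix (Fin 4) (Fin 4) ℝ), IsDer α β D →
      R = η • (1 : Matrix (Fin 4) (Fin 4) ℝ) + D → η = R 3 3) := by
  constructor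
  · constructor
    · rintro ⟨η, D, h, rfl⟩
      have h01 := congrFun (h ![1,0,0,0] ![0,0,0,1]) 1
      have h02 := congrFun (h ![1,0,0,0] ![0,0,0,1]) 2
      have h03 := congrFun (h ![1,0,0,0] ![0,0,0,1]) 3
      have h10 := congrFun (h ![0,1,0,0] ![0,0,0,1]) 0
      have h12 := congrFun (h ![0,1,0,0] ![0,0,0,1]) 2
      have h13 := congrFun (h ![0,1,0,0] ![0,0,0,1]) 3
      have h20 := congrFun (h ![0,0,1,0] ![0,0,0,1]) 0
      have h21 := congrFun (h ![0,0,1,0] ![0,0,0,1]) 1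
      have h23 := congrFun (h ![0,0,1,0] ![0,0,0,1]) 3
      simp [br, mulVec, dotProduct, Fin.sum_univ_four] at h01 h02 h03 h10 h12 h13 h20 h21 h23
      rcases h13 with h13 | h13; swap; · exact absurd h13 hβ
      rcases h23 with h23 | h23; swap; · exact absurd h23 hα
      simp [Matrix.add_apply, Matrix.smul_apply, Matrix.one_apply, h03, h13, h23, -mul_eq_mul_left_iff, -mul_eq_mul_right_iff]
      refine ⟨?_, ?_, ?_, ?_, ?_, ?_⟩ <;> linarith [h01, h02, h10, h12, h20, h21]
    · rintro ⟨h30, h31, h32, h10, h20, h01, h21, h02, h12⟩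
      refine ⟨R 3 3, R - R 3 3 • (1 : Matrix (Fin 4) (Fin 4) ℝ), ?_, by abel⟩
      apply isDer_of <;>
        simp [Matrix.sub_apply, Matrix.smul_apply, Matrix.one_apply, -mul_eq_mul_left_iff, -mul_eq_mul_right_iff] <;>
        assumption
  · rintro η D h rfl
    have h00 := congrFun (h ![1,0,0,0] ![0,0,0,1]) 0
    simp [br, mulVec, dotProduct, Fin.sum_univ_four] at h00
    simp [Matrix.add_apply, Matrix.smul_apply, Matrix.one_apply]
    linarith [h00]
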